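/- arXiv:2407.11353 — 4 statements merged into one kernel-verified Lean document; each statement's English description precedes it below -/
import Mathlib

section
/- Let ψ : [0,∞) → [0,∞) be a sub-root function with unique fixed point r*, and let a ≥ 0. Then ψ_a(r) := ψ(r) + a is also a sub-root function, and its fixed point r*_a satisfies r* ≤ r*_a ≤ r* + 2a. -/
/-- A function `ψ : [0,∞) → [0,∞)` is sub-root if it is nonnegative, nondecreasing,
and `r ↦ ψ(r)/√r` is nonincreasing for `r > 0`. -/
def SubRoot (ψ : ℝ → ℝ) : Prop :=
  (∀ r : ℝ, 0 ≤ r → 0 ≤ ψ r) ∧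
  (∀ r s : ℝ, 0 ≤ r → r ≤ s → ψ r ≤ ψ s) ∧
  (∀ r s : ℝ, 0 < r → r ≤ s → ψ s / Real.sqrt s ≤ ψ r / Real.sqrt r)

/-
A fixed point of a sub-root function separates the points where it lies above the diagonal from
those where it lies below: if `r ≤ φ r` and `φ s ≤ s`, then `√r ≤ φ r / √r ≤ φ s / √s ≤ √s`
whenever `s ≤ r`. Applied to `ψ` at `r*` and `r*_a` this gives `r* ≤ r*_a`; applied to `ψ + a` at
`r*_a` and `r* + 2a` it gives the upper bound, since `ψ (r* + 2a) ≤ √(r* (r* + 2a)) ≤ r* + a`.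
-/

namespace SubRoot

theorem add_const {ψ : ℝ → ℝ} (hψ : SubRoot ψ) {a : ℝ} (ha : 0 ≤ a) :
    SubRoot (fun r => ψ r + a) := by
  obtain ⟨hnonneg, hmono, hdiv⟩ := hψ
  refine ⟨fun r hr => add_nonneg (hnonneg r hr) ha,
    fun r s hr hrs => add_le_add_left (hmono r s hr hrs) a, fun r s hr hrs => ?_⟩
  have hconst : a / √s ≤ a / √r :=
    div_le_div_of_nonneg_left ha (Real.sqrt_pos.2 hr) (Real.sqrt_le_sqrt hrs)
  simpa only [add_div] using add_le_add (hdiv r s hr hrs) hconst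

theorem le_of_le_apply_of_apply_le {φ : ℝ → ℝ} (hφ : SubRoot φ) {r s : ℝ}
    (hr : r ≤ φ r) (hs : 0 < s) (hs_le : φ s ≤ s) : r ≤ s := by
  by_contra! hsr
  have hr_pos : 0 < r := hs.trans hsr
  have hsqrt : √r ≤ √s :=
    calc √r = r / √r := (Real.div_sqrt).symm
      _ ≤ φ r / √r := by gcongr
      _ ≤ φ s / √s := hφ.2.2 s r hs hsr.le
      _ ≤ s / √s := by gcongr
      _ = √s := Real.div_sqrt
  exact hsr.not_ge ((Real.sqrt_le_sqrt_iff hs.le).1 hsqrt)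

theorem apply_le_sqrt_mul {φ : ℝ → ℝ} (hφ : SubRoot φ) {r s : ℝ}
    (hr : 0 < r) (hr_le : φ r ≤ r) (hrs : r ≤ s) : φ s ≤ √(r * s) := by
  have hs : 0 < √s := Real.sqrt_pos.2 (hr.trans_le hrs)
  have h : φ s / √s ≤ √r :=
    calc φ s / √s ≤ φ r / √r := hφ.2.2 r s hr hrs
      _ ≤ r / √r := by gcongr
      _ = √r := Real.div_sqrt
  rw [Real.sqrt_mul hr.le]
  exact (div_le_iff₀ hs).1 h

end SubRoot

theorem stmt_2_general (ψ : ℝ → ℝ) (hψ : SubRoot ψ) (rstar : ℝ) (hrstar_pos : 0 < rstar)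
    (hfix : ψ rstar = rstar)
    (a : ℝ) (ha : 0 ≤ a) :
    SubRoot (fun r => ψ r + a) ∧
      ∀ ra : ℝ, 0 < ra → ψ ra + a = ra → rstar ≤ ra ∧ ra ≤ rstar + 2 * a := by
  have hψa := hψ.add_const ha
  refine ⟨hψa, fun ra hra hfixa => ⟨?_, ?_⟩⟩
  · exact hψ.le_of_le_apply_of_apply_le hfix.ge hra (by linarith)
  · have hsqrt := hψ.apply_le_sqrt_mul hrstar_pos hfix.le (by linarith : rstar ≤ rstar + 2 * a)
    have hmean : √(rstar * (rstar + 2 * a)) ≤ rstar + a :=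
      Real.sqrt_le_iff.2 ⟨by positivity, by nlinarith⟩
    exact hψa.le_of_le_apply_of_apply_le hfixa.ge (by positivity) (by linarith)

theorem stmt_2 (ψ : ℝ → ℝ) (hψ : SubRoot ψ) (rstar : ℝ) (hrstar_pos : 0 < rstar)
    (hfix : ψ rstar = rstar)
    (huniq : ∀ r : ℝ, 0 < r → ψ r = r → r = rstar)
    (a : ℝ) (ha : 0 ≤ a) :
    SubRoot (fun r => ψ r + a) ∧
      ∀ ra : ℝ, 0 < ra → ψ ra + a = ra → rstar ≤ ra ∧ ra ≤ rstar + 2 * a :=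
  stmt_2_general ψ hψ rstar hrstar_pos hfix a ha
end

section
/- Let ψ : [0,∞) → [0,∞) be a sub-root function with unique fixed point r*, let b ≥ 1 and c ≥ 0. Then ψ_b(r) := ψ(br + c) is also a sub-root function, and its fixed point r*_b satisfies r*_b ≤ b·r* + 2c/b. -/
/-
The map `r ↦ ψ (b r + c)` is sub-root because `ψ (b r + c) / √r` factors as
`ψ (b r + c) / √(b r + c)` times `√(b + c / r)`, both nonincreasing. For the bound, the ratio
condition between `r*` and `t ≥ r*` gives `ψ t ≤ √(r* t)`; at `s = b r* + 2c/b` this yields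
`ψ (b s + c) ≤ s`, and a sub-root function whose value at `s` is at most `s` has all its
fixed points below `s`.
-/

lemma sqrt_mul_add_div_sqrt_le_of_le {b c r s : ℝ} (hc : 0 ≤ c) (hr : 0 < r) (hrs : r ≤ s) :
    √(b * s + c) / √s ≤ √(b * r + c) / √r := by
  have hs : 0 < s := hr.trans_le hrs
  rw [← Real.sqrt_div' _ hs.le, ← Real.sqrt_div' _ hr.le]
  refine Real.sqrt_le_sqrt ?_
  rw [div_le_div_iff₀ hs hr]
  nlinarith

namespace SubRoot

variable {ψ : ℝ → ℝ}

theorem comp_mul_add (hψ : SubRoot ψ) {b c : ℝ} (hb : 0 < b) (hc : 0 ≤ c) :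
    SubRoot (fun r => ψ (b * r + c)) := by
  obtain ⟨hnonneg, hmono, hratio⟩ := hψ
  refine ⟨fun r hr => hnonneg _ (by positivity),
    fun r s hr hrs => hmono _ _ (by positivity) (by gcongr), fun r s hr hrs => ?_⟩
  have hR : 0 < b * r + c := by positivity
  have hS : 0 < b * s + c := hR.trans_le (by gcongr)
  calc ψ (b * s + c) / √s
      = ψ (b * s + c) / √(b * s + c) * (√(b * s + c) / √s) :=
        (div_mul_div_cancel₀ (Real.sqrt_pos.2 hS).ne').symm
    _ ≤ ψ (b * r + c) / √(b * r + c) * (√(b * r + c) / √r) :=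
        mul_le_mul (hratio _ _ hR (by gcongr)) (sqrt_mul_add_div_sqrt_le_of_le hc hr hrs)
          (by positivity) (div_nonneg (hnonneg _ hR.le) (Real.sqrt_nonneg _))
    _ = ψ (b * r + c) / √r := div_mul_div_cancel₀ (Real.sqrt_pos.2 hR).ne'

theorem apply_le_sqrt_mul_s3 (hψ : SubRoot ψ) {r t : ℝ} (hr : 0 < r) (hfix : Function.IsFixedPt ψ r)
    (hrt : r ≤ t) : ψ t ≤ √(r * t) := by
  have h := hψ.2.2 r t hr hrt
  rw [hfix.eq, Real.div_sqrt, div_le_iff₀ (Real.sqrt_pos.2 (hr.trans_le hrt))] at h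
  rwa [Real.sqrt_mul hr.le]

theorem le_of_isFixedPt_of_apply_le (hψ : SubRoot ψ) {r s : ℝ} (hfix : Function.IsFixedPt ψ r)
    (hs : 0 < s) (hψs : ψ s ≤ s) : r ≤ s := by
  by_contra! hsr
  have h := hψ.2.2 s r hs hsr.le
  rw [hfix.eq, Real.div_sqrt] at h
  have hψs' : ψ s / √s ≤ √s :=
    (div_le_div_of_nonneg_right hψs (Real.sqrt_nonneg s)).trans_eq Real.div_sqrt
  exact hsr.not_ge ((Real.sqrt_le_sqrt_iff hs.le).1 (h.trans hψs'))

end SubRoot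

theorem stmt_3_general (ψ : ℝ → ℝ) (hψ : SubRoot ψ) (rstar : ℝ) (hrstar_pos : 0 < rstar)
    (hfix : ψ rstar = rstar)
    (b c : ℝ) (hb : 1 ≤ b) (hc : 0 ≤ c) :
    SubRoot (fun r => ψ (b * r + c)) ∧
      ∀ rb : ℝ, 0 < rb → ψ (b * rb + c) = rb → rb ≤ b * rstar + 2 * c / b := by
  have hb0 : 0 < b := one_pos.trans_le hb
  have hψb := hψ.comp_mul_add hb0 hc
  refine ⟨hψb, fun rb _ hfixb => ?_⟩
  set s := b * rstar + 2 * c / b with hs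
  have hbs : b * s + c = b ^ 2 * rstar + 3 * c := by rw [hs]; field_simp; ring
  have hs_sq : s ^ 2 = b ^ 2 * rstar ^ 2 + 4 * c * rstar + (2 * c / b) ^ 2 := by
    rw [hs]; field_simp; ring
  have hrstar_le : rstar ≤ b * s + c := by
    rw [hbs]; nlinarith [one_le_pow₀ (n := 2) hb]
  have hψs : ψ (b * s + c) ≤ s := by
    refine (hψ.apply_le_sqrt_mul_s3 hrstar_pos hfix hrstar_le).trans
      (Real.sqrt_le_iff.2 ⟨by positivity, ?_⟩)
    rw [hbs, hs_sq]
    nlinarith [sq_nonneg (2 * c / b), mul_nonneg hc hrstar_pos.le]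
  exact hψb.le_of_isFixedPt_of_apply_le hfixb (by positivity) hψs

theorem stmt_3 (ψ : ℝ → ℝ) (hψ : SubRoot ψ) (rstar : ℝ) (hrstar_pos : 0 < rstar)
    (hfix : ψ rstar = rstar)
    (huniq : ∀ r : ℝ, 0 < r → ψ r = r → r = rstar)
    (b c : ℝ) (hb : 1 ≤ b) (hc : 0 ≤ c) :
    SubRoot (fun r => ψ (b * r + c)) ∧
      ∀ rb : ℝ, 0 < rb → ψ (b * rb + c) = rb → rb ≤ b * rstar + 2 * c / b :=
  stmt_3_general ψ hψ rstar hrstar_pos hfix b c hb hc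
end

section
/- Let λ̂₁ ≥ λ̂₂ ≥ ... ≥ λ̂_n > 0 be the eigenvalues of an n×n symmetric positive definite matrix K_n, let f ∈ ℝⁿ with (1/n)Σᵢ [Uᵀf]ᵢ²/λ̂ᵢ ≤ f₀² where U is the orthogonal matrix diagonalizing K_n. Then for η ∈ (0, 1/λ̂₁) and any natural number t ≥ 1, (1/n)‖(I − η K_n)^t f‖₂² ≤ f₀²/(2 e η t). -/
/-!
Conjugating by `U` turns `(1 - η K_n)^t` into `diag((1 - ηλ̂ᵢ)^t)` and preserves the sum of
squares, so the claim reduces coordinatewise to `(1 - ηλ̂ᵢ)^{2t} ≤ 1/(2eηλ̂ᵢt)`. Since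
`0 < ηλ̂ᵢ ≤ ηλ̂₁ < 1`, this follows from `1 - a ≤ e^{-a}` together with `e·x ≤ e^x` at `x = 2at`.
-/

open Matrix Real

theorem one_sub_pow_two_mul_le {a : ℝ} (ha₀ : 0 < a) (ha₁ : a ≤ 1) {t : ℕ} (ht : 0 < t) :
    (1 - a) ^ (2 * t) ≤ 1 / (2 * exp 1 * a * t) := by
  have hexp := exp_one_mul_le_exp (x := 2 * a * t)
  calc (1 - a) ^ (2 * t) ≤ exp (-a) ^ (2 * t) :=
        pow_le_pow_left₀ (by linarith) (one_sub_le_exp_neg a) _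
    _ = (exp (2 * a * t))⁻¹ := by
        rw [← exp_nat_mul, ← exp_neg]; push_cast; ring_nf
    _ ≤ 1 / (2 * exp 1 * a * t) := by
        rw [one_div]; exact inv_anti₀ (by positivity) (by linarith)

section OrthogonalConj

variable {m : Type*} [Fintype m] [DecidableEq m] {U : Matrix m m ℝ}

theorem Matrix.sum_sq_mulVec_of_mem_orthogonalGroup (hU : U ∈ orthogonalGroup m ℝ)
    (v : m → ℝ) : ∑ i, (U *ᵥ v) i ^ 2 = ∑ i, v i ^ 2 := by
  have hUtU : Uᵀ * U = 1 := by
    simpa [star_eq_conjTranspose] using (mem_orthogonalGroup_iff' m ℝ).mp hU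
  have hsq (w : m → ℝ) : ∑ i, w i ^ 2 = w ⬝ᵥ w := by simp [dotProduct, sq]
  rw [hsq, hsq, dotProduct_mulVec, ← mulVec_transpose, mulVec_mulVec, hUtU, one_mulVec]

theorem Matrix.one_sub_smul_conj_diagonal_pow (hU : U ∈ orthogonalGroup m ℝ) (d : m → ℝ)
    (η : ℝ) (t : ℕ) :
    (1 - η • (U * diagonal d * Uᵀ)) ^ t = U * diagonal (fun i ↦ (1 - η * d i) ^ t) * Uᵀ := by
  set φ := Unitary.conjStarAlgAut ℝ (Matrix m m ℝ) ⟨U, hU⟩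
  have hφ (x : Matrix m m ℝ) : U * x * Uᵀ = φ x := by
    simp [φ, star_eq_conjTranspose, conjTranspose_eq_transpose_of_trivial]
  have hdiag : 1 - η • diagonal d = diagonal (fun i ↦ 1 - η * d i) := by
    ext i j
    by_cases h : i = j <;> simp [h]
  rw [hφ, hφ, ← map_one φ, ← map_smul, ← map_sub, ← map_pow, hdiag, diagonal_pow]
  rfl

end OrthogonalConj

/-- **Contraction of the signal part under gradient-descent iterations.** Let
`K_n = U diag(λ̂) Uᵀ` be symmetric positive definite with nonincreasing eigenvalues
`λ̂₁ ≥ ... ≥ λ̂_n > 0`, and let `f ∈ ℝⁿ` with `(1/n) Σᵢ [Uᵀf]ᵢ²/λ̂ᵢ ≤ f₀²`. Then for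
`η ∈ (0, 1/λ̂₁)` and every `t ≥ 1`,
`(1/n) ‖(I − η K_n)^t f‖₂² ≤ f₀²/(2 e η t)`. -/
theorem stmt_9 (n : ℕ) (hn : 0 < n)
    (U : Matrix (Fin n) (Fin n) ℝ) (hU : U ∈ Matrix.orthogonalGroup (Fin n) ℝ)
    (lamhat : Fin n → ℝ) (hpos : ∀ i, 0 < lamhat i)
    (hsorted : ∀ i j : Fin n, i ≤ j → lamhat j ≤ lamhat i)
    (Kn : Matrix (Fin n) (Fin n) ℝ)
    (hKn : Kn = U * Matrix.diagonal lamhat * Uᵀ)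
    (f : Fin n → ℝ) (f₀ : ℝ)
    (hf : (1 / (n : ℝ)) * ∑ i, ((Uᵀ *ᵥ f) i) ^ 2 / lamhat i ≤ f₀ ^ 2)
    (η : ℝ) (hη0 : 0 < η) (hη1 : η < 1 / lamhat ⟨0, hn⟩)
    (t : ℕ) (ht : 1 ≤ t) :
    (1 / (n : ℝ)) * ∑ i, (((1 - η • Kn) ^ t *ᵥ f) i) ^ 2 ≤
      f₀ ^ 2 / (2 * Real.exp 1 * η * t) := by
  have hstep (i : Fin n) : η * lamhat i ≤ 1 := by
    have h0 := hpos ⟨0, hn⟩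
    have := hsorted ⟨0, hn⟩ i (Fin.mk_le_mk.mpr (Nat.zero_le _))
    rw [lt_div_iff₀ h0] at hη1
    nlinarith
  set g := Uᵀ *ᵥ f
  have hspec : ∑ i, (((1 - η • Kn) ^ t *ᵥ f) i) ^ 2 =
      ∑ i, (1 - η * lamhat i) ^ (2 * t) * g i ^ 2 := by
    rw [hKn, one_sub_smul_conj_diagonal_pow hU, ← mulVec_mulVec, ← mulVec_mulVec,
      sum_sq_mulVec_of_mem_orthogonalGroup hU]
    simp only [mulVec_diagonal, mul_pow, pow_mul']
    rfl
  have hterm (i : Fin n) :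
      (1 - η * lamhat i) ^ (2 * t) * g i ^ 2 ≤ g i ^ 2 / lamhat i / (2 * exp 1 * η * t) := by
    have hlam := hpos i
    calc (1 - η * lamhat i) ^ (2 * t) * g i ^ 2
        ≤ 1 / (2 * exp 1 * (η * lamhat i) * t) * g i ^ 2 := by
          gcongr; exact one_sub_pow_two_mul_le (by positivity) (hstep i) ht
      _ = g i ^ 2 / lamhat i / (2 * exp 1 * η * t) := by field_simp
  calc (1 / (n : ℝ)) * ∑ i, (((1 - η • Kn) ^ t *ᵥ f) i) ^ 2
      ≤ (1 / (n : ℝ)) * ∑ i, g i ^ 2 / lamhat i / (2 * exp 1 * η * t) := by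
        rw [hspec]; gcongr with i; exact hterm i
    _ = (1 / (n : ℝ)) * (∑ i, g i ^ 2 / lamhat i) / (2 * exp 1 * η * t) := by
        rw [← Finset.sum_div, mul_div_assoc]
    _ ≤ f₀ ^ 2 / (2 * exp 1 * η * t) := by gcongr
end

section
/- Fix η > 0, t ≥ 1, σ > 0 and eigenvalues λ̂₁,...,λ̂_n ∈ (0, 1/η), and let η_t := ηt. Suppose the empirical kernel complexity R̂(ε) := √((1/n) Σᵢ min{λ̂ᵢ, ε²}) satisfies σ R̂(√(1/η_t)) ≤ 1/η_t. Then σ²/n · Σᵢ (1 − (1 − η λ̂ᵢ)^t)²/λ̂ᵢ ≤ 1. -/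
/-- **Noise-variance bound via the kernel-complexity fixed point.** Fix `η > 0`, `t ≥ 1`,
`σ > 0` and eigenvalues `λ̂ᵢ ∈ (0, 1/η)`. Let
`R̂(ε) := √((1/n) Σᵢ min{λ̂ᵢ, ε²})` and `η_t := η t`. If `σ R̂(√(1/η_t)) ≤ 1/η_t`, then
`σ²/n · Σᵢ (1 − (1 − η λ̂ᵢ)^t)²/λ̂ᵢ ≤ 1`. -/
theorem stmt_11 (n : ℕ) (hn : 0 < n) (η : ℝ) (hη : 0 < η) (t : ℕ) (ht : 1 ≤ t)
    (σ : ℝ) (hσ : 0 < σ) (lamhat : Fin n → ℝ)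
    (hlam : ∀ i, 0 < lamhat i ∧ lamhat i < 1 / η)
    (hfix : σ * Real.sqrt ((1 / (n : ℝ)) *
        ∑ i, min (lamhat i) (Real.sqrt (1 / (η * t)) ^ 2)) ≤ 1 / (η * t)) :
    σ ^ 2 / (n : ℝ) * ∑ i, (1 - (1 - η * lamhat i) ^ t) ^ 2 / lamhat i ≤ 1 := by
  have htpos : (0:ℝ) < t := by exact_mod_cast Nat.lt_of_lt_of_le Nat.zero_lt_one ht
  have hT : (0:ℝ) < η * t := mul_pos hη htpos
  have hsq : Real.sqrt (1 / (η * t)) ^ 2 = 1 / (η * t) :=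
    Real.sq_sqrt (by positivity)
  rw [hsq] at hfix
  set T := η * t with hTdef
  -- per-term bound
  have key : ∀ i, (1 - (1 - η * lamhat i) ^ t) ^ 2 / lamhat i
      ≤ T ^ 2 * min (lamhat i) (1 / T) := by
    intro i
    obtain ⟨hL, hL'⟩ := hlam i
    set L := lamhat i
    have hηL : η * L < 1 := by
      have := (lt_div_iff₀ hη).mp hL'
      linarith [this]
    have hx0 : (0:ℝ) ≤ 1 - η * L := by nlinarith [mul_pos hη hL]
    have hpow0 : (0:ℝ) ≤ (1 - η * L) ^ t := pow_nonneg hx0 t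
    have hpow1 : (1 - η * L) ^ t ≤ 1 := pow_le_one₀ hx0 (by nlinarith [mul_pos hη hL])
    have hA0 : 0 ≤ 1 - (1 - η * L) ^ t := by linarith
    have hA1 : 1 - (1 - η * L) ^ t ≤ 1 := by linarith [hpow0]
    have hBern : 1 - (1 - η * L) ^ t ≤ T * L := by
      have h := one_add_mul_le_pow (a := -(η * L)) (by nlinarith [mul_pos hη hL]) t
      have h2 : 1 - (t:ℝ) * (η * L) ≤ (1 - η * L) ^ t := by
        have : (1 + -(η * L)) = 1 - η * L := by ring
        rw [this] at h; linarith [h]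
      have : T * L = (t:ℝ) * (η * L) := by rw [hTdef]; ring
      linarith [h2, this.ge]
    rw [div_le_iff₀ hL]
    rcases le_total L (1 / T) with hc | hc
    · rw [min_eq_left hc]
      nlinarith [mul_nonneg (mul_pos hT hL).le hA0]
    · rw [min_eq_right hc]
      have hTL : 1 ≤ T * L := by
        rw [div_le_iff₀ hT] at hc
        nlinarith
      have : T ^ 2 * (1 / T) * L = T * L := by field_simp
      rw [this]
      nlinarith
  have hsum : ∑ i, (1 - (1 - η * lamhat i) ^ t) ^ 2 / lamhat i
      ≤ T ^ 2 * ∑ i, min (lamhat i) (1 / T) := by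
    rw [Finset.mul_sum]
    exact Finset.sum_le_sum fun i _ => key i
  set M := ∑ i, min (lamhat i) (1 / T) with hMdef
  have hM0 : 0 ≤ (1 / (n:ℝ)) * M := by
    apply mul_nonneg (by positivity)
    apply Finset.sum_nonneg
    intro i _
    exact le_min (hlam i).1.le (by positivity)
  have hsqrt0 : 0 ≤ σ * Real.sqrt ((1 / (n:ℝ)) * M) :=
    mul_nonneg hσ.le (Real.sqrt_nonneg _)
  have h2 : σ ^ 2 * ((1 / (n:ℝ)) * M) ≤ (1 / T) ^ 2 := by
    have := mul_self_le_mul_self hsqrt0 hfix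
    have heq : σ * Real.sqrt ((1 / (n:ℝ)) * M) * (σ * Real.sqrt ((1 / (n:ℝ)) * M))
        = σ ^ 2 * ((1 / (n:ℝ)) * M) := by
      rw [mul_mul_mul_comm, Real.mul_self_sqrt hM0]; ring
    calc σ ^ 2 * ((1 / (n:ℝ)) * M) = _ := heq.symm
      _ ≤ (1 / T) * (1 / T) := this
      _ = (1 / T) ^ 2 := (sq (1/T)).symm
  have hcn : (0:ℝ) < (n:ℝ) := by exact_mod_cast hn
  have step : σ ^ 2 / (n : ℝ) * ∑ i, (1 - (1 - η * lamhat i) ^ t) ^ 2 / lamhat i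
      ≤ T ^ 2 * (σ ^ 2 * ((1 / (n:ℝ)) * M)) := by
    have h1 : σ ^ 2 / (n:ℝ) * ∑ i, (1 - (1 - η * lamhat i) ^ t) ^ 2 / lamhat i
        ≤ σ ^ 2 / (n:ℝ) * (T ^ 2 * M) := by
      apply mul_le_mul_of_nonneg_left hsum (by positivity)
    calc σ ^ 2 / (n:ℝ) * ∑ i, (1 - (1 - η * lamhat i) ^ t) ^ 2 / lamhat i
        ≤ σ ^ 2 / (n:ℝ) * (T ^ 2 * M) := h1
      _ = T ^ 2 * (σ ^ 2 * ((1 / (n:ℝ)) * M)) := by ring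
  calc σ ^ 2 / (n : ℝ) * ∑ i, (1 - (1 - η * lamhat i) ^ t) ^ 2 / lamhat i
      ≤ T ^ 2 * (σ ^ 2 * ((1 / (n:ℝ)) * M)) := step
    _ ≤ T ^ 2 * (1 / T) ^ 2 := by
        apply mul_le_mul_of_nonneg_left h2 (by positivity)
    _ = 1 := by field_simp
end
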